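/- For the hypercube graph Qₙ with n ≥ 2, the maximal nongenerating sets are exactly the coordinate halfspaces: 𝒩(Qₙ) = { Q_{n,i,b} : 1 ≤ i ≤ n, b ∈ {0,1} }, where Q_{n,i,b} is the set of all vertices (binary strings of length n) whose i-th entry equals b. -/
import Mathlib


open SimpleGraph

variable {V : Type*}

/-- `w` lies on a geodesic (shortest path) between `u` and `v` in `G`. -/
def OnGeodesic (G : SimpleGraph V) (u v w : V) : Prop :=
  ∃ p : G.Walk u v, p.IsPath ∧ p.length = G.dist u v ∧ w ∈ p.support

/-- A set of vertices is geodetically convex if it contains every vertex lying on a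
geodesic between two of its elements. -/
def GeoConvex (G : SimpleGraph V) (S : Set V) : Prop :=
  ∀ ⦃u⦄, u ∈ S → ∀ ⦃v⦄, v ∈ S → ∀ ⦃w⦄, OnGeodesic G u v w → w ∈ S

/-- The geodetic convex hull of a set of vertices: the smallest geodetically convex
set containing it. -/
def geoHull (G : SimpleGraph V) (S : Set V) : Set V :=
  ⋂₀ {K : Set V | S ⊆ K ∧ GeoConvex G K}

/-- A set of vertices is generating if its convex hull is the whole vertex set. -/
def GeoGenerates (G : SimpleGraph V) (S : Set V) : Prop :=
  geoHull G S = Set.univ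

/-- A maximal nongenerating set: a nongenerating set not properly contained in any
nongenerating set.  The family of these is `𝒩(G)`. -/
def MaxNongen (G : SimpleGraph V) (N : Set V) : Prop :=
  ¬ GeoGenerates G N ∧ ∀ M : Set V, ¬ GeoGenerates G M → N ⊆ M → N = M

/-- The Frattini subset `Φ(G)`: the intersection of all maximal nongenerating sets. -/
def geoFrattini (G : SimpleGraph V) : Set V :=
  ⋂₀ {N : Set V | MaxNongen G N}

/-- A vertex is simplicial if its neighbors induce a complete graph. -/
def Simplicial (G : SimpleGraph V) (v : V) : Prop :=
  ∀ ⦃u w : V⦄, G.Adj v u → G.Adj v w → u ≠ w → G.Adj u w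

/-- A minimal generating set: a generating set no proper subset of which generates.
The family of these is `𝒢(G)`. -/
def MinGen (G : SimpleGraph V) (L : Set V) : Prop :=
  GeoGenerates G L ∧ ∀ M : Set V, GeoGenerates G M → M ⊆ L → M = L

/-- The hypercube graph `Qₙ`: vertices are the binary strings of length `n`, adjacent
iff they differ in exactly one entry. -/
def hypercubeGraph (n : ℕ) : SimpleGraph (Fin n → Bool) :=
  SimpleGraph.fromRel (fun x y => ∃! i : Fin n, x i ≠ y i)

namespace HCAux

variable {n : ℕ}

def diffSet (x y : Fin n → Bool) : Finset (Fin n) :=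
  Finset.univ.filter fun i => x i ≠ y i

lemma mem_diffSet {x y : Fin n → Bool} {i : Fin n} : i ∈ diffSet x y ↔ x i ≠ y i := by
  simp [diffSet]

def ham (x y : Fin n → Bool) : ℕ := (diffSet x y).card

lemma ham_self (x : Fin n → Bool) : ham x x = 0 := by
  simp [ham, diffSet]

lemma ham_comm (x y : Fin n → Bool) : ham x y = ham y x := by
  unfold ham diffSet
  congr 1
  ext i
  simp [ne_comm]

lemma eq_of_ham_eq_zero {x y : Fin n → Bool} (h : ham x y = 0) : x = y := by
  funext j
  by_contra hj
  have h1 : j ∈ diffSet x y := mem_diffSet.mpr hj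
  have h2 := Finset.card_pos.mpr ⟨j, h1⟩
  unfold ham at h
  omega

lemma adj_iff {x y : Fin n → Bool} :
    (hypercubeGraph n).Adj x y ↔ ∃! i, x i ≠ y i := by
  rw [hypercubeGraph, fromRel_adj]
  constructor
  · rintro ⟨hne, h | h⟩
    · exact h
    · obtain ⟨i, hi, hu⟩ := h
      exact ⟨i, Ne.symm hi, fun j hj => hu j (Ne.symm hj)⟩
  · intro h
    refine ⟨?_, Or.inl h⟩
    obtain ⟨i, hi, -⟩ := h
    exact fun he => hi (congrFun he i)

lemma ham_eq_one_iff {x y : Fin n → Bool} : ham x y = 1 ↔ ∃! i, x i ≠ y i := by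
  rw [ham, Finset.card_eq_one]
  constructor
  · rintro ⟨i, hi⟩
    have h := fun j => Finset.ext_iff.mp hi j
    simp only [mem_diffSet, Finset.mem_singleton] at h
    exact ⟨i, (h i).mpr rfl, fun j hj => (h j).mp hj⟩
  · rintro ⟨i, hi, hu⟩
    refine ⟨i, ?_⟩
    ext j
    simp only [mem_diffSet, Finset.mem_singleton]
    exact ⟨hu j, fun h => h ▸ hi⟩

lemma ham_triangle (x z y : Fin n → Bool) : ham x y ≤ ham x z + ham z y := by
  have hsub : diffSet x y ⊆ diffSet x z ∪ diffSet z y := by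
    intro i hi
    rw [mem_diffSet] at hi
    rw [Finset.mem_union, mem_diffSet, mem_diffSet]
    by_contra h
    push_neg at h
    exact hi (h.1.trans h.2)
  calc ham x y ≤ (diffSet x z ∪ diffSet z y).card := Finset.card_le_card hsub
    _ ≤ ham x z + ham z y := Finset.card_union_le _ _

lemma ham_update {x y : Fin n → Bool} {i : Fin n} (hi : x i ≠ y i) :
    ham (Function.update x i (y i)) y + 1 = ham x y := by
  have h : diffSet (Function.update x i (y i)) y = (diffSet x y).erase i := by
    ext j
    rw [mem_diffSet, Finset.mem_erase, mem_diffSet]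
    by_cases hj : j = i
    · subst hj; simp
    · simp [Function.update_of_ne hj, hj]
  have hpos : 0 < (diffSet x y).card := Finset.card_pos.mpr ⟨i, mem_diffSet.mpr hi⟩
  rw [ham, h, Finset.card_erase_of_mem (mem_diffSet.mpr hi), ham]
  omega

lemma adj_update {x : Fin n → Bool} {i : Fin n} {c : Bool} (h : x i ≠ c) :
    (hypercubeGraph n).Adj x (Function.update x i c) := by
  rw [adj_iff]
  refine ⟨i, by simpa using h, fun j hj => ?_⟩
  by_contra hne
  simp [Function.update_of_ne hne] at hj

lemma exists_walk (x y : Fin n → Bool) :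
    ∃ p : (hypercubeGraph n).Walk x y, p.length = ham x y := by
  generalize hk : ham x y = k
  induction k generalizing x with
  | zero =>
    obtain rfl := eq_of_ham_eq_zero hk
    exact ⟨Walk.nil, rfl⟩
  | succ k ih =>
    have hpos : 0 < (diffSet x y).card := by rw [← ham]; omega
    obtain ⟨i, hi⟩ := Finset.card_pos.mp hpos
    rw [mem_diffSet] at hi
    have hham := ham_update hi
    obtain ⟨p, hp⟩ := ih (Function.update x i (y i)) (by omega)
    exact ⟨Walk.cons (adj_update hi) p, by simp [hp]⟩

lemma ham_le_length {x y : Fin n → Bool} (p : (hypercubeGraph n).Walk x y) :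
    ham x y ≤ p.length := by
  induction p with
  | nil => simp [ham_self]
  | @cons a b c h p ih =>
    have h1 : ham a b = 1 := ham_eq_one_iff.mpr (adj_iff.mp h)
    have h2 := ham_triangle a b c
    rw [Walk.length_cons]
    omega

lemma dist_eq (x y : Fin n → Bool) : (hypercubeGraph n).dist x y = ham x y := by
  obtain ⟨p, hp⟩ := exists_walk x y
  refine le_antisymm (hp ▸ SimpleGraph.dist_le p) ?_
  have hr : (hypercubeGraph n).Reachable x y := ⟨p⟩
  obtain ⟨q, hq⟩ := hr.exists_walk_length_eq_dist
  rw [← hq]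
  exact ham_le_length q

def Btw (u v w : Fin n → Bool) : Prop := ∀ i, u i = v i → w i = u i

lemma ham_add_eq_iff {u v w : Fin n → Bool} :
    ham u w + ham w v = ham u v ↔ Btw u v w := by
  have key1 : ∀ a c b : Bool, a ≠ b → (a ≠ c ∨ c ≠ b) := by decide
  have key2 : ∀ a b c : Bool, (a = b → c = a) → ((a ≠ c ∨ c ≠ b) ↔ a ≠ b) := by decide
  have key3 : ∀ a b c : Bool, (a = b → c = a) → ¬(a ≠ c ∧ c ≠ b) := by decide
  have hsub : diffSet u v ⊆ diffSet u w ∪ diffSet w v := by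
    intro i hi
    rw [mem_diffSet] at hi
    rw [Finset.mem_union, mem_diffSet, mem_diffSet]
    exact key1 _ _ _ hi
  have hcards := Finset.card_union_add_card_inter (diffSet u w) (diffSet w v)
  constructor
  · intro hsum i hiuv
    by_contra hwi
    have hmem : i ∈ diffSet u w ∩ diffSet w v := by
      rw [Finset.mem_inter, mem_diffSet, mem_diffSet]
      exact ⟨Ne.symm hwi, fun h => hwi (h.trans hiuv.symm)⟩
    have h1 : (diffSet u v).card ≤ (diffSet u w ∪ diffSet w v).card :=
      Finset.card_le_card hsub
    have h2 : 0 < (diffSet u w ∩ diffSet w v).card := Finset.card_pos.mpr ⟨i, hmem⟩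
    unfold ham at hsum
    omega
  · intro hbtw
    have hunion : diffSet u w ∪ diffSet w v = diffSet u v := by
      ext i
      rw [Finset.mem_union, mem_diffSet, mem_diffSet, mem_diffSet]
      exact key2 _ _ _ (hbtw i)
    have hinter : diffSet u w ∩ diffSet w v = ∅ := by
      rw [Finset.eq_empty_iff_forall_notMem]
      intro i hi
      rw [Finset.mem_inter, mem_diffSet, mem_diffSet] at hi
      exact key3 _ _ _ (hbtw i) hi
    unfold ham
    rw [hunion, hinter] at hcards
    simpa using hcards.symm

lemma btw_of_onGeodesic {u v w : Fin n → Bool}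
    (h : OnGeodesic (hypercubeGraph n) u v w) : Btw u v w := by
  obtain ⟨p, hp, hlen, hw⟩ := h
  rw [← ham_add_eq_iff]
  have h1 : ham u w ≤ (p.takeUntil w hw).length := ham_le_length _
  have h2 : ham w v ≤ (p.dropUntil w hw).length := ham_le_length _
  have h3 : (p.takeUntil w hw).length + (p.dropUntil w hw).length = p.length := by
    have := congrArg Walk.length (p.take_spec hw)
    rwa [Walk.length_append] at this
  have h4 : p.length = ham u v := by rw [hlen, dist_eq]
  have h5 := ham_triangle u w v
  omega

lemma onGeodesic_of_adj_btw {u y x : Fin n → Bool}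
    (hadj : (hypercubeGraph n).Adj u y) (hbtw : Btw u x y) :
    OnGeodesic (hypercubeGraph n) u x y := by
  obtain ⟨p, hp⟩ := exists_walk y x
  have hr : (hypercubeGraph n).Reachable y x := ⟨p⟩
  obtain ⟨q, hq, hqlen⟩ := hr.exists_path_of_dist
  have huy : ham u y = 1 := ham_eq_one_iff.mpr (adj_iff.mp hadj)
  have hsum : ham u y + ham y x = ham u x := ham_add_eq_iff.mpr hbtw
  have hu : u ∉ q.support := by
    intro hmem
    have hb2 : Btw y x u := btw_of_onGeodesic ⟨q, hq, hqlen, hmem⟩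
    have hs2 : ham y u + ham u x = ham y x := ham_add_eq_iff.mpr hb2
    have : ham y u = 1 := by rw [ham_comm]; exact huy
    omega
  refine ⟨Walk.cons hadj q, hq.cons hu, ?_, by simp⟩
  rw [Walk.length_cons, hqlen, dist_eq, dist_eq]
  omega

end HCAux

section General

variable {G : SimpleGraph V} {S K : Set V}

lemma subset_geoHull : S ⊆ geoHull G S := fun x hx K hK => hK.1 hx

lemma geoHull_subset (hK : S ⊆ K) (hc : GeoConvex G K) : geoHull G S ⊆ K :=
  fun x hx => hx K ⟨hK, hc⟩

lemma geoConvex_geoHull : GeoConvex G (geoHull G S) :=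
  fun u hu v hv w hw K hK => hK.2 (hu K hK) (hv K hK) hw

end General

namespace HCAux

variable {n : ℕ}

lemma halfspace_convex (i : Fin n) (b : Bool) :
    GeoConvex (hypercubeGraph n) {x | x i = b} := by
  intro u hu v hv w hw
  have hb := btw_of_onGeodesic hw i (hu.trans hv.symm)
  simp only [Set.mem_setOf_eq] at *
  rw [hb, hu]

lemma halfspace_nongen (i : Fin n) (b : Bool) :
    ¬ GeoGenerates (hypercubeGraph n) {x | x i = b} := by
  intro h
  have hsub : geoHull (hypercubeGraph n) {x | x i = b} ⊆ {x | x i = b} :=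
    geoHull_subset subset_rfl (halfspace_convex i b)
  rw [h] at hsub
  have := hsub (Set.mem_univ (fun _ => !b))
  simp at this

lemma halfspace_max {i : Fin n} {b : Bool} {M : Set (Fin n → Bool)}
    (hHM : {x | x i = b} ⊆ M) (x : Fin n → Bool) (hx : x ∈ M) (hxi : x i ≠ b) :
    GeoGenerates (hypercubeGraph n) M := by
  refine Set.eq_univ_iff_forall.mpr fun y => ?_
  by_cases hy : y i = b
  · exact subset_geoHull (hHM hy)
  · have hu : Function.update y i b ∈ M := hHM (by simp)
    have hadj : (hypercubeGraph n).Adj (Function.update y i b) y := by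
      have := adj_update (x := Function.update y i b) (i := i) (c := y i)
        (by simp; exact fun h => hy h.symm)
      have he : Function.update (Function.update y i b) i (y i) = y := by
        funext j
        by_cases hj : j = i
        · subst hj; simp
        · simp [Function.update_of_ne hj]
      rwa [he] at this
    have hbtw : Btw (Function.update y i b) x y := by
      intro j hj
      by_cases hji : j = i
      · subst hji
        rw [Function.update_self] at hj
        exact absurd hj.symm hxi
      · rw [Function.update_of_ne hji]
    exact geoConvex_geoHull (subset_geoHull hu) (subset_geoHull hx)
      (onGeodesic_of_adj_btw hadj hbtw)

lemma convex_subset_halfspace (hn : 0 < n) {C : Set (Fin n → Bool)}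
    (hC : GeoConvex (hypercubeGraph n) C) (hne : C ≠ Set.univ) :
    ∃ (i : Fin n) (b : Bool), C ⊆ {x | x i = b} := by
  obtain ⟨z, hz⟩ : ∃ z, z ∉ C := by
    by_contra h
    push_neg at h
    exact hne (Set.eq_univ_of_forall h)
  rcases Set.eq_empty_or_nonempty C with hCe | hCne
  · exact ⟨⟨0, hn⟩, true, by simp [hCe]⟩
  · obtain ⟨y, hyC, hymin⟩ := Set.exists_min_image C (fun y => ham y z) (Set.toFinite C) hCne
    have hyz : ham y z ≠ 0 := fun h => hz ((eq_of_ham_eq_zero h) ▸ hyC)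
    have hpos : 0 < (diffSet y z).card := by rw [← ham] at *; omega
    obtain ⟨i, hi⟩ := Finset.card_pos.mp hpos
    rw [mem_diffSet] at hi
    refine ⟨i, y i, fun x hxC => ?_⟩
    simp only [Set.mem_setOf_eq]
    by_contra hxi
    have hxz : x i = z i := by
      cases hzv : z i <;> cases hyv : y i <;> cases hxv : x i <;>
        simp_all
    set y' := Function.update y i (z i) with hy'
    have hadj : (hypercubeGraph n).Adj y y' := adj_update hi
    have hbtw : Btw y x y' := by
      intro j hj
      by_cases hji : j = i
      · subst hji; exact absurd hj.symm hxi
      · rw [hy', Function.update_of_ne hji]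
    have hy'C : y' ∈ C := hC hyC hxC (onGeodesic_of_adj_btw hadj hbtw)
    have hmin := hymin y' hy'C
    have hupd := ham_update hi
    rw [hy'] at hmin
    omega

end HCAux


open HCAux

/-- For `n ≥ 2`, the maximal nongenerating sets of the hypercube `Qₙ` are
exactly the coordinate halfspaces `Q_{n,i,b}` of vertices with `i`-th entry `b`. -/
theorem maxNongen_hypercube_iff (n : ℕ) (hn : 2 ≤ n) (N : Set (Fin n → Bool)) :
    MaxNongen (hypercubeGraph n) N ↔
      ∃ (i : Fin n) (b : Bool), N = {x : Fin n → Bool | x i = b} := by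
  constructor
  · rintro ⟨hng, hmax⟩
    have hhull : ¬ GeoGenerates (hypercubeGraph n) (geoHull (hypercubeGraph n) N) := by
      intro h
      apply hng
      have h1 : geoHull (hypercubeGraph n) (geoHull (hypercubeGraph n) N)
          ⊆ geoHull (hypercubeGraph n) N :=
        geoHull_subset subset_rfl geoConvex_geoHull
      rw [h] at h1
      exact Set.eq_univ_of_univ_subset h1
    have hNeq : N = geoHull (hypercubeGraph n) N := hmax _ hhull subset_geoHull
    have hconv : GeoConvex (hypercubeGraph n) N := hNeq ▸ geoConvex_geoHull
    have hNne : N ≠ Set.univ := by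
      intro h
      apply hng
      rw [GeoGenerates, ← hNeq, h]
    obtain ⟨i, b, hsub⟩ := convex_subset_halfspace (by omega) hconv hNne
    exact ⟨i, b, hmax _ (halfspace_nongen i b) hsub⟩
  · rintro ⟨i, b, rfl⟩
    refine ⟨halfspace_nongen i b, fun M hM hsub => ?_⟩
    by_contra hne
    have : ∃ x ∈ M, x i ≠ b := by
      by_contra h
      push_neg at h
      exact hne (Set.Subset.antisymm hsub h)
    obtain ⟨x, hx, hxi⟩ := this
    exact hM (halfspace_max hsub x hx hxi)
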